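/- Let V, W, Q be finite-dimensional real inner product spaces and let G : Q →ₗ[ℝ] V, K : V →ₗ[ℝ] W, Z : V →ₗ[ℝ] V be linear maps with K ∘ G = 0 and Z ∘ G = 0, Z self-adjoint. Let α > 0 and suppose (E', B', p') ∈ V × W × Q satisfies: α E' − Kᵀ B' + G p' + Z E' = α E + Kᵀ B − Z E, K E' + α B' = −K E + α B, −Gᵀ E' + α p' = 0, where E ∈ V, B ∈ W satisfy Gᵀ E = 0, and Gᵀ, Kᵀ denote adjoints. If Gᵀ G + α² id is positive definite on Q, then p' = 0 and Gᵀ E' = 0. -/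

import Mathlib

/-! Applying `Gᵀ` to the first equation kills the curl and impedance terms, since
`Gᵀ Kᵀ = (K G)ᵀ = 0` and `Gᵀ Z = (Z G)ᵀ = 0`, and also `Gᵀ E = 0`; what is left is
`α Gᵀ E' + Gᵀ G p' = 0`. The third equation says `Gᵀ E' = α p'`, so
`(Gᵀ G + α²) p' = 0`, and positive definiteness forces `p' = 0`, hence `Gᵀ E' = 0`. -/

open RealInnerProductSpace

section Adjoint

variable {𝕜 U V W : Type*} [RCLike 𝕜]
  [NormedAddCommGroup U] [InnerProductSpace 𝕜 U] [FiniteDimensional 𝕜 U]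
  [NormedAddCommGroup V] [InnerProductSpace 𝕜 V] [FiniteDimensional 𝕜 V]
  [NormedAddCommGroup W] [InnerProductSpace 𝕜 W] [FiniteDimensional 𝕜 W]

theorem LinearMap.adjoint_apply_adjoint_apply_eq_zero {G : U →ₗ[𝕜] V} {K : V →ₗ[𝕜] W}
    (h : K ∘ₗ G = 0) (w : W) : LinearMap.adjoint G (LinearMap.adjoint K w) = 0 := by
  rw [← LinearMap.comp_apply, ← LinearMap.adjoint_comp, h, map_zero, LinearMap.zero_apply]

theorem LinearMap.adjoint_apply_apply_eq_zero_of_adjoint_eq_self {G : U →ₗ[𝕜] V} {Z : V →ₗ[𝕜] V}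
    (hZ : LinearMap.adjoint Z = Z) (h : Z ∘ₗ G = 0) (v : V) :
    LinearMap.adjoint G (Z v) = 0 := by
  rw [← hZ]
  exact LinearMap.adjoint_apply_adjoint_apply_eq_zero h v

end Adjoint

theorem LinearMap.eq_zero_of_apply_eq_zero_of_inner_pos {Q : Type*}
    [NormedAddCommGroup Q] [InnerProductSpace ℝ Q] {T : Q →ₗ[ℝ] Q}
    (hT : ∀ q : Q, q ≠ 0 → 0 < ⟪T q, q⟫) {p : Q} (hp : T p = 0) : p = 0 := by
  by_contra hne
  simpa [hp] using hT p hne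

theorem stmt_6_general {V W Q : Type*}
    [NormedAddCommGroup V] [InnerProductSpace ℝ V] [FiniteDimensional ℝ V]
    [NormedAddCommGroup W] [InnerProductSpace ℝ W] [FiniteDimensional ℝ W]
    [NormedAddCommGroup Q] [InnerProductSpace ℝ Q] [FiniteDimensional ℝ Q]
    (G : Q →ₗ[ℝ] V) (K : V →ₗ[ℝ] W) (Z : V →ₗ[ℝ] V)
    (hKG : K ∘ₗ G = 0) (hZG : Z ∘ₗ G = 0)
    (hZsym : LinearMap.adjoint Z = Z)
    (α : ℝ)
    (E E' : V) (B B' : W) (p' : Q)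
    (hE : LinearMap.adjoint G E = 0)
    (heq1 : α • E' - (LinearMap.adjoint K) B' + G p' + Z E'
          = α • E + (LinearMap.adjoint K) B - Z E)
    (heq3 : -(LinearMap.adjoint G) E' + α • p' = 0)
    (hpos : ∀ q : Q, q ≠ 0 →
      0 < ⟪((LinearMap.adjoint G ∘ₗ G) + α^2 • (LinearMap.id : Q →ₗ[ℝ] Q)) q, q⟫) :
    p' = 0 ∧ LinearMap.adjoint G E' = 0 := by
  have hdiv : α • LinearMap.adjoint G E' + LinearMap.adjoint G (G p') = 0 := by
    simpa [LinearMap.adjoint_apply_adjoint_apply_eq_zero hKG,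
      LinearMap.adjoint_apply_apply_eq_zero_of_adjoint_eq_self hZsym hZG, hE]
      using congrArg (LinearMap.adjoint G) heq1
  have hGE' : LinearMap.adjoint G E' = α • p' := neg_add_eq_zero.mp heq3
  have hp : p' = 0 := by
    refine LinearMap.eq_zero_of_apply_eq_zero_of_inner_pos hpos ?_
    rw [hGE', smul_smul, ← sq] at hdiv
    simpa [add_comm] using hdiv
  exact ⟨hp, by rw [hGE', hp, smul_zero]⟩

theorem stmt_6 {V W Q : Type*}
    [NormedAddCommGroup V] [InnerProductSpace ℝ V] [FiniteDimensional ℝ V]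
    [NormedAddCommGroup W] [InnerProductSpace ℝ W] [FiniteDimensional ℝ W]
    [NormedAddCommGroup Q] [InnerProductSpace ℝ Q] [FiniteDimensional ℝ Q]
    (G : Q →ₗ[ℝ] V) (K : V →ₗ[ℝ] W) (Z : V →ₗ[ℝ] V)
    (hKG : K ∘ₗ G = 0) (hZG : Z ∘ₗ G = 0)
    (hZsym : LinearMap.adjoint Z = Z)
    (α : ℝ) (hα : 0 < α)
    (E E' : V) (B B' : W) (p' : Q)
    (hE : LinearMap.adjoint G E = 0)
    (heq1 : α • E' - (LinearMap.adjoint K) B' + G p' + Z E'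
          = α • E + (LinearMap.adjoint K) B - Z E)
    (heq2 : K E' + α • B' = -(K E) + α • B)
    (heq3 : -(LinearMap.adjoint G) E' + α • p' = 0)
    (hpos : ∀ q : Q, q ≠ 0 →
      0 < ⟪((LinearMap.adjoint G ∘ₗ G) + α^2 • (LinearMap.id : Q →ₗ[ℝ] Q)) q, q⟫) :
    p' = 0 ∧ LinearMap.adjoint G E' = 0 :=
  stmt_6_general G K Z hKG hZG hZsym α E E' B B' p' hE heq1 heq3 hpos
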